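/- arXiv:1905.05519 — 6 statements merged into one kernel-verified Lean document; each statement's English description precedes it below -/
import Mathlib

section
/- (Free representation of an automaton.) Let T be a monad on Type, ρ : T ∘ F ⟹ F ∘ T a natural transformation, (X, χ) a T-algebra carrying a T-automaton structure δ : X → O × (A → X), and g : G → X a set of generators with a chosen right inverse s : X → T G of g^♯. Define γ := (Prod.map id (s ∘ ·)) ∘ δ ∘ g : G → O × (A → T G). Then the deterministic automaton (T G, γ^♯) accepts the same languages through s: for every x ∈ X, l_{T G}(s(x)) = l_X(x); in particular, for any initial state i : 1 → X, the automaton (T G, s ∘ i, γ^♯) accepts the same language as (X, i, δ). -/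
open CategoryTheory

universe u

/-- The language map of a deterministic automaton `(X, δ)` with outputs in `O`. -/
def detLang {A O X : Type u} (δ : X → O × (A → X)) : X → List A → O
  | x, [] => (δ x).1
  | x, a :: w => detLang δ ((δ x).2 a) w

/-- The free `T`-extension of `h : Y → F (T Y)`, where `F X = O × (A → X)`,
with respect to a distributive-law-like family `ρ : T ∘ F ⟹ F ∘ T`:
`h^♯ = F μ_Y ∘ ρ_{T Y} ∘ T h`. -/
def freeExtAut {T : Monad (Type u)} {A O : Type u}
    (ρ : ∀ X : Type u, T.toFunctor.obj (O × (A → X)) → O × (A → T.toFunctor.obj X))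
    {Y : Type u} (h : Y → O × (A → T.toFunctor.obj Y)) :
    T.toFunctor.obj Y → O × (A → T.toFunctor.obj Y) :=
  Prod.map (id : O → O)
      (fun k : A → T.toFunctor.obj (T.toFunctor.obj Y) => T.μ.app Y ∘ k)
    ∘ ρ (T.toFunctor.obj Y) ∘ T.toFunctor.map (TypeCat.ofHom h)

/-!
The free extension `g^♯ = χ ∘ T g` is a morphism of `T`-algebras `(T G, μ) → (X, χ)`. Together
with the naturality of `ρ` and the `T`-automaton law for `δ`, this makes `g^♯` a homomorphism of
automata `(T G, γ^♯) → (X, δ)` as soon as `F g^♯ ∘ γ = δ ∘ g`, which holds because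
`g^♯ ∘ s = id`. Homomorphisms preserve languages, so `l_{T G} (s x) = l_X (g^♯ (s x)) = l_X x`.
-/

def IsAutomatonHom {A O Y Z : Type u} (δY : Y → O × (A → Y)) (δZ : Z → O × (A → Z))
    (f : Y → Z) : Prop :=
  δZ ∘ f = Prod.map id (f ∘ ·) ∘ δY

theorem IsAutomatonHom.detLang_apply {A O Y Z : Type u} {δY : Y → O × (A → Y)}
    {δZ : Z → O × (A → Z)} {f : Y → Z} (hf : IsAutomatonHom δY δZ f) (y : Y) :
    detLang δZ (f y) = detLang δY y := by
  funext w
  induction w generalizing y with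
  | nil => exact congrArg Prod.fst (congrFun hf y)
  | cons a w ih =>
    have hy : δZ (f y) = Prod.map id (f ∘ ·) (δY y) := congrFun hf y
    simp only [detLang, hy, Prod.map_snd, Function.comp_apply]
    exact ih _

open TypeCat Function

universe v in
theorem CategoryTheory.Functor.map_ofHom_comp (F : Type u ⥤ Type v) {X Y Z : Type u}
    (f : X → Y) (g : Y → Z) :
    ⇑(F.map (ofHom (g ∘ f))) = F.map (ofHom g) ∘ F.map (ofHom f) :=
  funext (F.map_comp_apply (ofHom f) (ofHom g))

theorem CategoryTheory.Monad.freeExt_comp_μ (T : Monad (Type u)) {X G : Type u}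
    {χ : T.obj X → X} (hassoc : χ ∘ T.μ.app X = χ ∘ T.map (ofHom χ)) (g : G → X) :
    (χ ∘ T.map (ofHom g)) ∘ T.μ.app G = χ ∘ T.map (ofHom (χ ∘ T.map (ofHom g))) := by
  have hμ : T.map (ofHom g) ∘ T.μ.app G = T.μ.app X ∘ T.map (T.map (ofHom g)) :=
    funext fun x => (ConcreteCategory.congr_hom (T.μ.naturality (ofHom g)) x).symm
  calc (χ ∘ T.map (ofHom g)) ∘ T.μ.app G
      = (χ ∘ T.μ.app X) ∘ T.map (T.map (ofHom g)) := by rw [comp_assoc, hμ]; rfl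
    _ = χ ∘ T.map (ofHom χ) ∘ T.map (T.map (ofHom g)) := by rw [hassoc]; rfl
    _ = χ ∘ T.map (ofHom (χ ∘ T.map (ofHom g))) := by
      rw [T.toFunctor.map_ofHom_comp (T.map (ofHom g)) χ]; rfl

section

variable {T : Monad (Type u)} {A O : Type u}
  {ρ : ∀ X : Type u, T.obj (O × (A → X)) → O × (A → T.obj X)}

theorem map_comp_freeExtAut {X Y : Type u} {χ : T.obj X → X} {φ : T.obj Y → X}
    (hρφ : ρ X ∘ T.map (ofHom (Prod.map id (φ ∘ ·)))
      = Prod.map id (T.map (ofHom φ) ∘ ·) ∘ ρ (T.obj Y))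
    (hφ : φ ∘ T.μ.app Y = χ ∘ T.map (ofHom φ)) (h : Y → O × (A → T.obj Y)) :
    Prod.map id (φ ∘ ·) ∘ freeExtAut ρ h
      = Prod.map id (χ ∘ ·) ∘ ρ X ∘ T.map (ofHom (Prod.map id (φ ∘ ·) ∘ h)) :=
  calc Prod.map id (φ ∘ ·) ∘ freeExtAut ρ h
      = Prod.map id ((φ ∘ T.μ.app Y) ∘ ·) ∘ ρ (T.obj Y) ∘ T.map (ofHom h) := rfl
    _ = Prod.map id (χ ∘ ·) ∘ (Prod.map id (T.map (ofHom φ) ∘ ·) ∘ ρ (T.obj Y))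
          ∘ T.map (ofHom h) := by rw [hφ]; rfl
    _ = Prod.map id (χ ∘ ·) ∘ ρ X ∘ T.map (ofHom (Prod.map id (φ ∘ ·) ∘ h)) := by
          rw [← hρφ, T.toFunctor.map_ofHom_comp h]; rfl

theorem isAutomatonHom_freeExt {X G : Type u} {χ : T.obj X → X}
    (hρnat : ∀ (X Y : Type u) (f : X → Y),
      ρ Y ∘ T.map (ofHom (Prod.map id (f ∘ ·))) = Prod.map id (T.map (ofHom f) ∘ ·) ∘ ρ X)
    (hassoc : χ ∘ T.μ.app X = χ ∘ T.map (ofHom χ)) {δ : X → O × (A → X)}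
    (hδ : δ ∘ χ = Prod.map id (χ ∘ ·) ∘ ρ X ∘ T.map (ofHom δ))
    {g : G → X} {h : G → O × (A → T.obj G)}
    (hgh : Prod.map id ((χ ∘ T.map (ofHom g)) ∘ ·) ∘ h = δ ∘ g) :
    IsAutomatonHom (freeExtAut ρ h) δ (χ ∘ T.map (ofHom g)) := by
  rw [IsAutomatonHom, map_comp_freeExtAut (hρnat _ _ _) (T.freeExt_comp_μ hassoc g), hgh,
    T.toFunctor.map_ofHom_comp g δ]
  exact congrArg (· ∘ T.map (ofHom g)) hδ

end

theorem free_representation_general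
    (T : Monad (Type u)) (A O : Type u)
    (ρ : ∀ X : Type u, T.toFunctor.obj (O × (A → X)) → O × (A → T.toFunctor.obj X))
    (hρnat : ∀ (X Y : Type u) (f : X → Y),
      ρ Y ∘ T.toFunctor.map (TypeCat.ofHom (Prod.map (id : O → O) (fun k : A → X => f ∘ k)))
        = Prod.map (id : O → O)
            (fun k : A → T.toFunctor.obj X => T.toFunctor.map (TypeCat.ofHom f) ∘ k) ∘ ρ X)
    (X : Type u) (χ : T.toFunctor.obj X → X)
    (hassoc : χ ∘ T.μ.app X = χ ∘ T.toFunctor.map (TypeCat.ofHom χ))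
    (δ : X → O × (A → X))
    (hδ : δ ∘ χ
      = Prod.map (id : O → O) (fun k : A → T.toFunctor.obj X => χ ∘ k)
          ∘ ρ X ∘ T.toFunctor.map (TypeCat.ofHom δ))
    (G : Type u) (g : G → X) (s : X → T.toFunctor.obj G)
    (hs : (χ ∘ T.toFunctor.map (TypeCat.ofHom g)) ∘ s = id) :
    (∀ x : X,
      detLang (freeExtAut ρ (Prod.map (id : O → O) (fun k : A → X => s ∘ k) ∘ δ ∘ g))
          (s x)
        = detLang δ x)
    ∧ ∀ i : PUnit.{u + 1} → X,
        detLang (freeExtAut ρ (Prod.map (id : O → O) (fun k : A → X => s ∘ k) ∘ δ ∘ g))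
            (s (i PUnit.unit))
          = detLang δ (i PUnit.unit) := by
  have hγ : Prod.map id ((χ ∘ T.map (ofHom g)) ∘ ·) ∘ Prod.map id (s ∘ ·) ∘ δ ∘ g = δ ∘ g :=
    congrArg (fun f : X → X => Prod.map id (f ∘ ·) ∘ δ ∘ g) hs
  have hom := isAutomatonHom_freeExt hρnat hassoc hδ hγ
  have lang (x : X) :
      detLang (freeExtAut ρ (Prod.map id (s ∘ ·) ∘ δ ∘ g)) (s x) = detLang δ x := by
    rw [← hom.detLang_apply (s x)]
    exact congrArg (detLang δ) (congrFun hs x)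
  exact ⟨lang, fun i => lang (i PUnit.unit)⟩

/-- Free representation of an automaton: given a `T`-algebra `(X, χ)`
carrying a `T`-automaton structure `δ`, and a set of generators `g : G → X` with chosen
right inverse `s : X → T G` of `g^♯`, the deterministic automaton `(T G, γ^♯)` with
`γ = F s ∘ δ ∘ g` accepts the same languages through `s`: `l_{T G}(s x) = l_X(x)` for all
`x`; in particular, for any initial state `i : 1 → X`, the automaton `(T G, s ∘ i, γ^♯)`
accepts the same language as `(X, i, δ)`. -/
theorem free_representation
    (T : Monad (Type u)) (A O : Type u)
    (ρ : ∀ X : Type u, T.toFunctor.obj (O × (A → X)) → O × (A → T.toFunctor.obj X))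
    (hρnat : ∀ (X Y : Type u) (f : X → Y),
      ρ Y ∘ T.toFunctor.map (TypeCat.ofHom (Prod.map (id : O → O) (fun k : A → X => f ∘ k)))
        = Prod.map (id : O → O)
            (fun k : A → T.toFunctor.obj X => T.toFunctor.map (TypeCat.ofHom f) ∘ k) ∘ ρ X)
    (X : Type u) (χ : T.toFunctor.obj X → X)
    (hunit : χ ∘ T.η.app X = id)
    (hassoc : χ ∘ T.μ.app X = χ ∘ T.toFunctor.map (TypeCat.ofHom χ))
    (δ : X → O × (A → X))
    (hδ : δ ∘ χ
      = Prod.map (id : O → O) (fun k : A → T.toFunctor.obj X => χ ∘ k)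
          ∘ ρ X ∘ T.toFunctor.map (TypeCat.ofHom δ))
    (G : Type u) (g : G → X) (s : X → T.toFunctor.obj G)
    (hs : (χ ∘ T.toFunctor.map (TypeCat.ofHom g)) ∘ s = id) :
    (∀ x : X,
      detLang (freeExtAut ρ (Prod.map (id : O → O) (fun k : A → X => s ∘ k) ∘ δ ∘ g))
          (s x)
        = detLang δ x)
    ∧ ∀ i : PUnit.{u + 1} → X,
        detLang (freeExtAut ρ (Prod.map (id : O → O) (fun k : A → X => s ∘ k) ∘ δ ∘ g))
            (s (i PUnit.unit))
          = detLang δ (i PUnit.unit) :=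
  free_representation_general T A O ρ hρnat X χ hassoc δ hδ G g s hs
end

section
/- Let (X, χ) be a T-algebra, regard X as a set of generators for itself via id_X (whose free T-extension is χ), and let I := {x ∈ X | x is isolated with respect to id_X}, with inclusion ι : I → X. Assume I is finite and that ι is a set of generators for (X, χ) (i.e., ι^♯ = χ ∘ T ι is a split epimorphism of sets). Then: (1) for every set of generators g : G → X with G finite, card I ≤ card G; and (2) every minimal set of generators g : G → X with G finite satisfies card G = card I. -/
open CategoryTheory

universe u

/-- `g : G → X` is a set of generators for the `T`-algebra `(X, χ)`:
its free `T`-extension `g^♯ = χ ∘ T g` is a split epimorphism of sets. -/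
def IsGeneratorSet (T : Monad (Type u)) {G X : Type u}
    (χ : T.toFunctor.obj X → X) (g : G → X) : Prop :=
  ∃ s : X → T.toFunctor.obj G, (χ ∘ T.toFunctor.map (TypeCat.ofHom g)) ∘ s = id

/-- `r : G` is redundant with respect to `g : G → X`: there is `U ∈ T(G∖{r})` with
`(g ∘ ι_r)^♯(U) = g r`.  Elements that are not redundant are called isolated. -/
def Redundant (T : Monad (Type u)) {G X : Type u}
    (χ : T.toFunctor.obj X → X) (g : G → X) (r : G) : Prop :=
  ∃ U : T.toFunctor.obj {x : G // x ≠ r},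
    χ (T.toFunctor.map (TypeCat.ofHom (fun u : {x : G // x ≠ r} => g u.val)) U) = g r

/-! Any set of generators `g` reaches every isolated element `x`: otherwise `g` factors
through `X∖{x}`, and a section of `g^♯` exhibits `x` as redundant. Conversely, if `g` is minimal
and the isolated elements generate, then each `g r` is isolated (else the isolated elements are
all `g` of something other than `r` and so generate `g r` from `G∖{r}`), and `g` is injective
because `g r' = χ (η (g r'))`. So a minimal `g` is a bijection onto `I`. -/

abbrev Isolated (T : Monad (Type u)) {X : Type u} (χ : T.obj X → X) : Type u :=
  {x : X // ¬ Redundant T χ (id : X → X) x}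

section

variable {T : Monad (Type u)} {G H X : Type u} {χ : T.obj X → X} {g : G → X}

theorem Redundant.of_factor {r : G} (k : H → {x : G // x ≠ r}) {φ : H → X}
    (hφ : ∀ h, g (k h) = φ h) {U : T.obj H} (hU : χ (T.map (TypeCat.ofHom φ) U) = g r) :
    Redundant T χ g r := by
  refine ⟨T.map (TypeCat.ofHom k) U, ?_⟩
  rw [← Functor.map_comp_apply]
  convert hU using 4
  exact congrArg TypeCat.ofHom (funext hφ)

theorem injective_of_forall_not_redundant (hunit : χ ∘ T.η.app X = id)
    (hmin : ∀ r, ¬ Redundant T χ g r) : Function.Injective g := by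
  intro r r' hrr'
  by_contra hne
  refine hmin r ⟨T.η.app _ ⟨r', Ne.symm hne⟩, ?_⟩
  rw [← NatTrans.naturality_apply T.η]
  exact (congrFun hunit (g r')).trans hrr'.symm

namespace IsGeneratorSet

theorem exists_apply_eq_of_isolated (hg : IsGeneratorSet T χ g) (i : Isolated T χ) :
    ∃ r, g r = i := by
  obtain ⟨s, hs⟩ := hg
  by_contra! hne
  exact i.prop (Redundant.of_factor (fun r => ⟨g r, hne r⟩) (fun _ => rfl) (congrFun hs i))

theorem card_isolated_le [Finite G] (hg : IsGeneratorSet T χ g) :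
    Nat.card (Isolated T χ) ≤ Nat.card G := by
  choose f hf using hg.exists_apply_eq_of_isolated
  refine Nat.card_le_card_of_injective f (Function.Injective.of_comp (f := g) ?_)
  simpa only [Function.comp_def, hf] using Subtype.val_injective

theorem not_redundant_id_of_forall_not_redundant (hg : IsGeneratorSet T χ g)
    (hI : IsGeneratorSet T χ (Subtype.val : Isolated T χ → X))
    (hmin : ∀ r, ¬ Redundant T χ g r) (r : G) : ¬ Redundant T χ id (g r) := by
  intro hred
  obtain ⟨s, hs⟩ := hI
  choose f hf using hg.exists_apply_eq_of_isolated
  have hf_ne : ∀ i, f i ≠ r := fun i hir => i.prop (by rwa [← hf i, hir])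
  exact hmin r (Redundant.of_factor (fun i => ⟨f i, hf_ne i⟩) hf (congrFun hs (g r)))

theorem card_eq_card_isolated (hunit : χ ∘ T.η.app X = id) (hg : IsGeneratorSet T χ g)
    (hI : IsGeneratorSet T χ (Subtype.val : Isolated T χ → X))
    (hmin : ∀ r, ¬ Redundant T χ g r) : Nat.card G = Nat.card (Isolated T χ) := by
  let e : G → Isolated T χ :=
    fun r => ⟨g r, hg.not_redundant_id_of_forall_not_redundant hI hmin r⟩
  refine Nat.card_congr (Equiv.ofBijective e ⟨fun r r' h => ?_, fun i => ?_⟩)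
  · exact injective_of_forall_not_redundant hunit hmin (congrArg Subtype.val h)
  · obtain ⟨r, hr⟩ := hg.exists_apply_eq_of_isolated i
    exact ⟨r, Subtype.ext hr⟩

end IsGeneratorSet

end

theorem isolated_generators_minimal_card_general
    (T : Monad (Type u)) (X : Type u) (χ : T.toFunctor.obj X → X)
    (hunit : χ ∘ T.η.app X = id)
    (hIgen : IsGeneratorSet T χ
      (fun i : {x : X // ¬ Redundant T χ (id : X → X) x} => (i : X))) :
    (∀ (G : Type u) (g : G → X), Finite G → IsGeneratorSet T χ g →
        Nat.card {x : X // ¬ Redundant T χ (id : X → X) x} ≤ Nat.card G)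
    ∧ (∀ (G : Type u) (g : G → X), Finite G → IsGeneratorSet T χ g →
        (∀ r : G, ¬ Redundant T χ g r) →
        Nat.card G = Nat.card {x : X // ¬ Redundant T χ (id : X → X) x}) :=
  ⟨fun _ _ _ hg => hg.card_isolated_le,
    fun _ _ _ hg hmin => hg.card_eq_card_isolated hunit hIgen hmin⟩

/-- Let `(X, χ)` be a `T`-algebra, regard `X` as a set of generators for
itself via `id`, and let `I` be its isolated elements, with inclusion `ι : I → X`.
If `I` is finite and `ι` is a set of generators for `(X, χ)`, then (1) every finite set
of generators `g : G → X` satisfies `card I ≤ card G`, and (2) every finite *minimal* set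
of generators `g : G → X` satisfies `card G = card I`. -/
theorem isolated_generators_minimal_card
    (T : Monad (Type u)) (X : Type u) (χ : T.toFunctor.obj X → X)
    (hunit : χ ∘ T.η.app X = id)
    (hassoc : χ ∘ T.μ.app X = χ ∘ T.toFunctor.map (TypeCat.ofHom χ))
    (hIfin : Finite {x : X // ¬ Redundant T χ (id : X → X) x})
    (hIgen : IsGeneratorSet T χ
      (fun i : {x : X // ¬ Redundant T χ (id : X → X) x} => (i : X))) :
    (∀ (G : Type u) (g : G → X), Finite G → IsGeneratorSet T χ g →
        Nat.card {x : X // ¬ Redundant T χ (id : X → X) x} ≤ Nat.card G)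
    ∧ (∀ (G : Type u) (g : G → X), Finite G → IsGeneratorSet T χ g →
        (∀ r : G, ¬ Redundant T χ g r) →
        Nat.card G = Nat.card {x : X // ¬ Redundant T χ (id : X → X) x}) :=
  isolated_generators_minimal_card_general T X χ hunit hIgen
end

section
/- (Generator reduction.) Let (X, χ) be a T-algebra and g : G → X a set of generators for it. If r ∈ G is redundant with respect to g, then the restriction g ∘ ι_r : G∖{r} → X is again a set of generators for (X, χ), i.e., (g ∘ ι_r)^♯ : T(G∖{r}) → X has a right inverse as a function. -/
/-!
If `g^♯` has a section `s` and `g = h^♯ ∘ f` for some `f : G → T H`, then `μ ∘ T f ∘ s` is a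
section of `h^♯`, because `h^♯` is a morphism of `T`-algebras out of the free algebra
(`h^♯ ∘ μ ∘ T f = (h^♯ ∘ f)^♯`). A redundant `r` provides such an `f` for `h = g ∘ ι_r`:
send `r` to the witness `U` and every other generator `x` to `η ⟨x, _⟩`.
-/

open CategoryTheory

universe u

section FreeExtension

variable (T : Monad (Type u)) {X : Type u} (χ : T.toFunctor.obj X → X)

def freeExt {G : Type u} (g : G → X) : T.toFunctor.obj G → X :=
  χ ∘ T.toFunctor.map (TypeCat.ofHom g)

variable {T χ}

theorem freeExt_eta (hunit : χ ∘ T.η.app X = id) {H : Type u} (h : H → X) (x : H) :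
    freeExt T χ h (T.η.app H x) = h x := by
  have hnat := NatTrans.naturality_apply T.η (TypeCat.ofHom h) x
  rw [freeExt, Function.comp_apply, ← hnat]
  exact congrFun hunit (h x)

theorem freeExt_mu_map (hassoc : χ ∘ T.μ.app X = χ ∘ T.toFunctor.map (TypeCat.ofHom χ))
    {G H : Type u} (h : H → X) (f : G → T.toFunctor.obj H) (t : T.toFunctor.obj G) :
    freeExt T χ h (T.μ.app H (T.toFunctor.map (TypeCat.ofHom f) t)) =
      freeExt T χ (freeExt T χ h ∘ f) t := by
  have hnat := NatTrans.naturality_apply T.μ (TypeCat.ofHom h) (T.toFunctor.map (TypeCat.ofHom f) t)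
  simp only [Functor.comp_obj, Functor.comp_map] at hnat
  simp only [freeExt, Function.comp_apply]
  rw [← hnat, ← Function.comp_apply (f := χ), hassoc, Function.comp_apply,
    ← Functor.map_comp_apply, ← Functor.map_comp_apply]
  rfl

end FreeExtension

theorem IsGeneratorSet.of_freeExt_comp {T : Monad (Type u)} {X G H : Type u}
    {χ : T.toFunctor.obj X → X}
    (hassoc : χ ∘ T.μ.app X = χ ∘ T.toFunctor.map (TypeCat.ofHom χ))
    {g : G → X} (hgen : IsGeneratorSet T χ g) {h : H → X} (f : G → T.toFunctor.obj H)
    (hf : freeExt T χ h ∘ f = g) : IsGeneratorSet T χ h := by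
  obtain ⟨s, hs⟩ := hgen
  refine ⟨T.μ.app H ∘ T.toFunctor.map (TypeCat.ofHom f) ∘ s, funext fun x => ?_⟩
  have hsection := freeExt_mu_map hassoc h f (s x)
  rw [hf] at hsection
  exact hsection.trans (congrFun hs x)

theorem Redundant.exists_freeExt_comp {T : Monad (Type u)} {X G : Type u}
    {χ : T.toFunctor.obj X → X} (hunit : χ ∘ T.η.app X = id) {g : G → X} {r : G}
    (hr : Redundant T χ g r) :
    ∃ f : G → T.toFunctor.obj {x : G // x ≠ r},
      freeExt T χ (fun u : {x : G // x ≠ r} => g u.val) ∘ f = g := by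
  classical
  obtain ⟨U, hU⟩ := hr
  refine ⟨fun x => if hx : x = r then U else T.η.app _ ⟨x, hx⟩, funext fun x => ?_⟩
  by_cases hx : x = r
  · subst hx
    simpa [freeExt] using hU
  · simpa [hx] using freeExt_eta hunit (fun u : {x : G // x ≠ r} => g u.val) ⟨x, hx⟩

/-- Generator reduction: if `g : G → X` is a set of generators for the
`T`-algebra `(X, χ)` and `r ∈ G` is redundant with respect to `g`, then the restriction
`g ∘ ι_r : G∖{r} → X` is again a set of generators for `(X, χ)`. -/
theorem generator_reduction
    (T : Monad (Type u)) (X : Type u) (χ : T.toFunctor.obj X → X)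
    (hunit : χ ∘ T.η.app X = id)
    (hassoc : χ ∘ T.μ.app X = χ ∘ T.toFunctor.map (TypeCat.ofHom χ))
    (G : Type u) (g : G → X) (hgen : IsGeneratorSet T χ g)
    (r : G) (hr : Redundant T χ g r) :
    IsGeneratorSet T χ (fun u : {x : G // x ≠ r} => g u.val) := by
  obtain ⟨f, hf⟩ := hr.exists_freeExt_comp hunit
  exact hgen.of_freeExt_comp hassoc f hf
end

section
/- Let T be a monad on Type and ρ : T ∘ F ⟹ F ∘ T a natural transformation additionally satisfying the unit law ρ_X ∘ η_{F X} = F(η_X) for all X. Given a deterministic automaton (R, δ), define the determinization δ̂ := ((Prod.map id (η_R ∘ ·)) ∘ δ)^♯ : T R → O × (A → T R). Then η_R is a homomorphism of deterministic automata from (R, δ) to (T R, δ̂), i.e., δ̂ ∘ η_R = (Prod.map id (η_R ∘ ·)) ∘ δ, and consequently l_{T R}(η_R(x)) = l_R(x) for every x ∈ R: the automata (R, δ) and (T R, δ̂) accept the same languages. -/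
open CategoryTheory

universe u

theorem detLang_apply_of_comp_eq {A O X Y : Type u} {δ : X → O × (A → X)}
    {δ' : Y → O × (A → Y)} {f : X → Y}
    (hf : δ' ∘ f = Prod.map (id : O → O) (fun k : A → X => f ∘ k) ∘ δ) (x : X) :
    detLang δ' (f x) = detLang δ x := by
  have hδ' (x : X) : δ' (f x) = Prod.map id (fun k => f ∘ k) (δ x) := congrFun hf x
  funext w
  induction w generalizing x with
  | nil => simp only [detLang, hδ', Prod.map_fst, id]
  | cons a w ih =>
    simp only [detLang, hδ', Prod.map_snd, Function.comp_apply]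
    exact ih _

/-- The extension `h^♯` extends `h` along `η_Y`: naturality of `η` moves it past `T h`,
the unit law moves it past `ρ`, and `μ_Y ∘ η_{T Y} = id` cancels it. -/
theorem freeExtAut_comp_eta {T : Monad (Type u)} {A O : Type u}
    {ρ : ∀ X : Type u, T.toFunctor.obj (O × (A → X)) → O × (A → T.toFunctor.obj X)}
    {Y : Type u}
    (hρunit : ρ (T.toFunctor.obj Y) ∘ T.η.app (O × (A → T.toFunctor.obj Y))
      = Prod.map (id : O → O) (fun k : A → T.toFunctor.obj Y => T.η.app _ ∘ k))
    (h : Y → O × (A → T.toFunctor.obj Y)) :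
    freeExtAut ρ h ∘ T.η.app Y = h := by
  funext y
  have hη : T.toFunctor.map (TypeCat.ofHom h) (T.η.app Y y) = T.η.app _ (h y) :=
    (ConcreteCategory.congr_hom (T.η.naturality (TypeCat.ofHom h)) y).symm
  have hμη (t : T.toFunctor.obj Y) : T.μ.app Y (T.η.app _ t) = t :=
    ConcreteCategory.congr_hom (T.left_unit Y) t
  have hρ : ρ _ (T.η.app _ (h y)) = Prod.map id (fun k => T.η.app _ ∘ k) (h y) :=
    congrFun hρunit (h y)
  simp only [freeExtAut, Function.comp_apply, hη, hρ]
  ext a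
  · rfl
  · exact hμη _

theorem determinization_preserves_language_general
    (T : Monad (Type u)) (A O : Type u)
    (ρ : ∀ X : Type u, T.toFunctor.obj (O × (A → X)) → O × (A → T.toFunctor.obj X))
    (hρunit : ∀ X : Type u,
      ρ X ∘ T.η.app (O × (A → X))
        = Prod.map (id : O → O) (fun k : A → X => T.η.app X ∘ k))
    (R : Type u) (δ : R → O × (A → R)) :
    (freeExtAut ρ (Prod.map (id : O → O) (fun k : A → R => T.η.app R ∘ k) ∘ δ)
        ∘ T.η.app R
      = Prod.map (id : O → O) (fun k : A → R => T.η.app R ∘ k) ∘ δ)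
    ∧ ∀ x : R,
        detLang (freeExtAut ρ (Prod.map (id : O → O) (fun k : A → R => T.η.app R ∘ k) ∘ δ))
            (T.η.app R x)
          = detLang δ x := by
  have hom := freeExtAut_comp_eta (hρunit _)
    (Prod.map (id : O → O) (fun k : A → R => T.η.app R ∘ k) ∘ δ)
  exact ⟨hom, detLang_apply_of_comp_eq hom⟩

/-- if `ρ : T ∘ F ⟹ F ∘ T` is a natural transformation additionally
satisfying the unit law `ρ_X ∘ η_{F X} = F η_X`, then for any deterministic automaton
`(R, δ)` with determinization `δ̂ = (F η_R ∘ δ)^♯ : T R → O × (A → T R)`, the unit `η_R`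
is a homomorphism of deterministic automata from `(R, δ)` to `(T R, δ̂)`, and
consequently `l_{T R}(η_R x) = l_R x` for every `x : R`: both automata accept the same
languages. -/
theorem determinization_preserves_language
    (T : Monad (Type u)) (A O : Type u)
    (ρ : ∀ X : Type u, T.toFunctor.obj (O × (A → X)) → O × (A → T.toFunctor.obj X))
    (hρnat : ∀ (X Y : Type u) (f : X → Y),
      ρ Y ∘ T.toFunctor.map (TypeCat.ofHom (Prod.map (id : O → O) (fun k : A → X => f ∘ k)))
        = Prod.map (id : O → O)
            (fun k : A → T.toFunctor.obj X => T.toFunctor.map (TypeCat.ofHom f) ∘ k) ∘ ρ X)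
    (hρunit : ∀ X : Type u,
      ρ X ∘ T.η.app (O × (A → X))
        = Prod.map (id : O → O) (fun k : A → X => T.η.app X ∘ k))
    (R : Type u) (δ : R → O × (A → R)) :
    (freeExtAut ρ (Prod.map (id : O → O) (fun k : A → R => T.η.app R ∘ k) ∘ δ)
        ∘ T.η.app R
      = Prod.map (id : O → O) (fun k : A → R => T.η.app R ∘ k) ∘ δ)
    ∧ ∀ x : R,
        detLang (freeExtAut ρ (Prod.map (id : O → O) (fun k : A → R => T.η.app R ∘ k) ∘ δ))
            (T.η.app R x)
          = detLang δ x :=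
  determinization_preserves_language_general T A O ρ hρunit R δ
end

section
/- There is no two-state alternating finite automaton over a one-letter alphabet accepting the language of words of positive even length. Precisely: let X be a type with exactly two elements and A a type with exactly one element; for every transition function δ : X → A → Set (Set X) with each δ x a upward closed, every upward closed initial configuration I : Set (Set X), and every set of accepting states Fin ⊆ X, the accepted language {w : List A | ∃ S ∈ conf(w), S ⊆ Fin} is not equal to {w : List A | w.length > 0 ∧ Even w.length}. -/
universe u

/-- One-step successor configuration of an alternating finite automaton:
`step U a = {V | ∃ W ∈ U, ∀ x ∈ W, ∃ Z ∈ δ x a, Z ⊆ V}`. -/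
def afaStep {X A : Type u} (δ : X → A → Set (Set X)) (U : Set (Set X)) (a : A) :
    Set (Set X) :=
  {V | ∃ W ∈ U, ∀ x ∈ W, ∃ Z ∈ δ x a, Z ⊆ V}

/-- Configuration of an AFA after reading a word: `conf [] = I` and
`conf (w ++ [a]) = step (conf w) a`. -/
def afaConf {X A : Type u} (δ : X → A → Set (Set X)) (I : Set (Set X))
    (w : List A) : Set (Set X) :=
  w.foldl (afaStep δ) I

/-!
Over a one-letter alphabet `{a}`, let `p V` be the set of states having a clause of `δ · a`
inside `V` (`afaPre δ a`). Then `aⁿ` is accepted iff some `S ∈ I` lies in `vₙ = pⁿ F`.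
As `p` is monotone, an inclusion `vₘ ⊆ vₘ'` with `m + m'` odd propagates to one between a
positive even and an odd index, contradicting the language. Hence `v₀, v₁` and `v₁, v₂` are
incomparable; with two states this forces `v₀ = v₁ᶜ = v₂`, yet `a²` is accepted and the empty
word is not.
-/

def afaPre {X A : Type u} (δ : X → A → Set (Set X)) (a : A) (V : Set X) : Set X :=
  {x | ∃ Z ∈ δ x a, Z ⊆ V}

section Automaton

variable {X A : Type u} (δ : X → A → Set (Set X))

theorem afaPre_mono (a : A) : Monotone (afaPre δ a) :=
  fun _ _ hUV _ ⟨Z, hZ, hZU⟩ => ⟨Z, hZ, hZU.trans hUV⟩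

theorem exists_subset_afaStep_iff (U : Set (Set X)) (a : A) (V : Set X) :
    (∃ S ∈ afaStep δ U a, S ⊆ V) ↔ ∃ S ∈ U, S ⊆ afaPre δ a V := by
  constructor
  · rintro ⟨S, ⟨W, hW, hWS⟩, hSV⟩
    refine ⟨W, hW, fun x hx => ?_⟩
    obtain ⟨Z, hZ, hZS⟩ := hWS x hx
    exact ⟨Z, hZ, hZS.trans hSV⟩
  · rintro ⟨S, hS, hSV⟩
    exact ⟨V, ⟨S, hS, fun x hx => hSV hx⟩, subset_rfl⟩

theorem exists_subset_afaConf_replicate_iff (I : Set (Set X)) (a : A) (n : ℕ) (V : Set X) :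
    (∃ S ∈ afaConf δ I (List.replicate n a), S ⊆ V) ↔
      ∃ S ∈ I, S ⊆ (afaPre δ a)^[n] V := by
  induction n generalizing I with
  | zero => simp [afaConf]
  | succ n ih =>
    rw [List.replicate_succ, afaConf, List.foldl_cons, ← afaConf, ih,
      exists_subset_afaStep_iff, Function.iterate_succ_apply']

end Automaton

theorem not_iterate_le_of_odd_add {α : Type*} [Preorder α] {f : α → α} (hf : Monotone f)
    {Q : α → Prop} (hQ : Monotone Q) {a : α} (hQa : ∀ n, Q (f^[n] a) ↔ 0 < n ∧ Even n)
    {m m' : ℕ} (hodd : Odd (m + m')) : ¬ f^[m] a ≤ f^[m'] a := by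
  intro hle
  -- shifting by `m + 2` moves `m` to a positive even index and `m'` to an odd one
  have hshift : f^[m + 2 + m] a ≤ f^[m + 2 + m'] a := by
    simpa only [Function.iterate_add_apply] using (hf.iterate (m + 2)) hle
  have heven : Q (f^[m + 2 + m] a) := (hQa _).mpr ⟨by omega, by rw [Nat.even_iff]; omega⟩
  have hodd_shift : Odd (m + 2 + m') := by rw [Nat.odd_iff] at hodd ⊢; omega
  exact Nat.not_even_iff_odd.mpr hodd_shift ((hQa _).mp (hQ hshift heven)).2

theorem Set.eq_compl_of_not_subset_of_not_subset {X : Type*} (hX : Nat.card X = 2)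
    {U V : Set X} (hUV : ¬ U ⊆ V) (hVU : ¬ V ⊆ U) : U = Vᶜ := by
  obtain ⟨u, huU, huV⟩ := Set.not_subset.mp hUV
  obtain ⟨x, hxV, hxU⟩ := Set.not_subset.mp hVU
  obtain ⟨y, -, hy⟩ := (Nat.card_eq_two_iff' x).mp hX
  have hux : u ≠ x := fun h => huV (h ▸ hxV)
  ext z
  rcases eq_or_ne z x with rfl | hzx
  · simp [hxU, hxV]
  · rw [(hy z hzx).trans (hy u hux).symm]
    simp [huU, huV]

theorem no_two_state_afa_for_positive_even_general
    (X A : Type u) (hX : Nat.card X = 2) (hA : Nat.card A = 1)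
    (δ : X → A → Set (Set X))
    (I : Set (Set X))
    (F : Set X) :
    {w : List A | ∃ S ∈ afaConf δ I w, S ⊆ F}
      ≠ {w : List A | 0 < w.length ∧ Even w.length} := by
  intro hlang
  obtain ⟨-, ⟨a⟩⟩ := Nat.card_eq_one_iff_unique.mp hA
  set v : ℕ → Set X := fun n => (afaPre δ a)^[n] F
  have hacc : ∀ n, (∃ S ∈ I, S ⊆ v n) ↔ 0 < n ∧ Even n := fun n => by
    simpa [exists_subset_afaConf_replicate_iff] using
      Set.ext_iff.mp hlang (List.replicate n a)
  have hincomp : ∀ m m', Odd (m + m') → ¬ v m ⊆ v m' := fun m m' =>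
    not_iterate_le_of_odd_add (afaPre_mono δ a) (Q := fun V => ∃ S ∈ I, S ⊆ V)
      (fun _ _ hVW ⟨S, hS, hSV⟩ => ⟨S, hS, hSV.trans hVW⟩) hacc
  have hv0 : v 0 = (v 1)ᶜ :=
    Set.eq_compl_of_not_subset_of_not_subset hX (hincomp 0 1 odd_one) (hincomp 1 0 odd_one)
  have hv2 : v 2 = (v 1)ᶜ :=
    Set.eq_compl_of_not_subset_of_not_subset hX (hincomp 2 1 (by decide)) (hincomp 1 2 (by decide))
  have hacc2 := (hacc 2).mpr ⟨two_pos, even_two⟩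
  rw [hv2, ← hv0] at hacc2
  exact lt_irrefl 0 ((hacc 0).mp hacc2).1

/-- there is no two-state alternating finite automaton over a one-letter
alphabet accepting the language of words of positive even length: for every type `X`
with exactly two elements, every type `A` with exactly one element, every transition
function `δ` with upward closed values, every upward closed initial configuration `I`,
and every set `F` of accepting states, the accepted language
`{w | ∃ S ∈ conf w, S ⊆ F}` differs from `{w | w.length > 0 ∧ Even w.length}`. -/
theorem no_two_state_afa_for_positive_even
    (X A : Type u) (hX : Nat.card X = 2) (hA : Nat.card A = 1)
    (δ : X → A → Set (Set X))
    (hδup : ∀ (x : X) (a : A) (S S' : Set X), S ∈ δ x a → S ⊆ S' → S' ∈ δ x a)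
    (I : Set (Set X))
    (hIup : ∀ S S' : Set X, S ∈ I → S ⊆ S' → S' ∈ I)
    (F : Set X) :
    {w : List A | ∃ S ∈ afaConf δ I w, S ⊆ F}
      ≠ {w : List A | 0 < w.length ∧ Even w.length} :=
  no_two_state_afa_for_positive_even_general X A hX hA δ I F
end

section
/- The language map of the determinization of a non-deterministic automaton is a homomorphism of complete join-semilattices: for an NFA with states X, transitions δ : X → A → Set X and accepting states Fin ⊆ X, the determinized language map L : Set X → Set (List A) preserves arbitrary unions, i.e., for every family (S_i) of subsets of X, L(⋃_i S_i) = ⋃_i L(S_i); in particular L({s₁} ∪ {s₂}) = L({s₁}) ∪ L({s₂}). -/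
universe u v

/-- The determinized language map of an NFA with transitions `δ` and accepting states
`F`: `[] ∈ L S` iff `S ∩ F ≠ ∅`, and `(a :: w) ∈ L S` iff `w ∈ L (⋃ x ∈ S, δ x a)`. -/
def nfaLang {A X : Type u} (δ : X → A → Set X) (F : Set X) : Set X → List A → Prop
  | S, [] => (S ∩ F).Nonempty
  | S, a :: w => nfaLang δ F (⋃ x ∈ S, δ x a) w

lemma nfaLang_iUnion {A X : Type u} (δ : X → A → Set X) (F : Set X) :
    ∀ (w : List A) {ι : Type v} (S : ι → Set X),
      nfaLang δ F (⋃ i, S i) w ↔ ∃ i, nfaLang δ F (S i) w := by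
  intro w
  induction w with
  | nil =>
    intro ι S
    simp [nfaLang, Set.iUnion_inter, Set.nonempty_iUnion]
  | cons a w ih =>
    intro ι S
    have h : (⋃ x ∈ ⋃ i, S i, δ x a) = ⋃ i, ⋃ x ∈ S i, δ x a := by
      ext y; simp; tauto
    simp only [nfaLang, h]
    exact ih _

/-- the language map of the determinization of an NFA is a homomorphism of
complete join-semilattices: `L (⋃ i, S i) = ⋃ i, L (S i)` for every family of subsets of
states; in particular `L ({s₁} ∪ {s₂}) = L {s₁} ∪ L {s₂}`. -/
theorem nfa_detLang_preserves_unions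
    {A X : Type u} (δ : X → A → Set X) (F : Set X) :
    (∀ (ι : Type v) (S : ι → Set X),
      {w : List A | nfaLang δ F (⋃ i, S i) w} = ⋃ i, {w : List A | nfaLang δ F (S i) w})
    ∧ ∀ s₁ s₂ : X,
        {w : List A | nfaLang δ F ({s₁} ∪ {s₂}) w}
          = {w : List A | nfaLang δ F {s₁} w} ∪ {w : List A | nfaLang δ F {s₂} w} := by
  constructor
  · intro ι S
    ext w
    simp [nfaLang_iUnion]
  · intro s₁ s₂
    ext w
    have h : ({s₁} ∪ {s₂} : Set X) = ⋃ b : Bool, (if b then {s₁} else {s₂}) := by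
      ext x; simp [Set.mem_iUnion]
    rw [h]
    simp only [Set.mem_setOf_eq, nfaLang_iUnion, Set.mem_union]
    constructor
    · rintro ⟨b, hb⟩; cases b
      · right; simpa using hb
      · left; simpa using hb
    · rintro (h | h)
      · exact ⟨true, by simpa⟩
      · exact ⟨false, by simpa⟩
end
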